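/- Fix r > 0. Let H_{2,r} be the class of functions f : Σ* → ℝ whose Hankel operator H_f is Hilbert–Schmidt with ‖H_f‖_{HS} ≤ r. Then for any sample S = (x_1,…,x_m) of strings, the empirical Rademacher complexity of H_{2,r} on S is at most r/√m. -/

import Mathlib

/-!
Split every sample string trivially as `x_i = x_i · ε`. Then `∑ σ_i f(x_i)` is the Frobenius
pairing of the Hankel matrix `H_f` with `∑ σ_i e_{x_i} e_εᵀ`, so by Cauchy–Schwarz it is at most
`‖H_f‖_HS ≤ r` times the Frobenius norm of that matrix. Orthogonality of the Rademacher signs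
makes the expected squared Frobenius norm equal to `m`, and Jensen's inequality bounds the
expected norm by `√m`.
-/

open BigOperators

/-- Expectation over `m` i.i.d. Rademacher random variables. -/
noncomputable def radExp (m : ℕ) (F : (Fin m → ℝ) → ℝ) : ℝ :=
  (∑ ε : Fin m → Bool, F (fun i => if ε i then (1 : ℝ) else -1)) / 2 ^ m

open Finset

section Rademacher

variable {m : ℕ}

lemma radExp_mono {F G : (Fin m → ℝ) → ℝ} (h : ∀ σ, F σ ≤ G σ) : radExp m F ≤ radExp m G := by
  unfold radExp
  gcongr with ε
  exact h _

lemma radExp_const_mul (c : ℝ) (F : (Fin m → ℝ) → ℝ) :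
    radExp m (fun σ => c * F σ) = c * radExp m F := by
  simp only [radExp, ← mul_sum, mul_div_assoc]

lemma radExp_sum {ι : Type*} (s : Finset ι) (F : ι → (Fin m → ℝ) → ℝ) :
    radExp m (fun σ => ∑ k ∈ s, F k σ) = ∑ k ∈ s, radExp m (F k) := by
  simp only [radExp, sum_comm (s := univ), sum_div]

lemma sq_radExp_le (F : (Fin m → ℝ) → ℝ) : radExp m F ^ 2 ≤ radExp m (fun σ => F σ ^ 2) := by
  simpa [radExp] using sum_div_card_sq_le_sum_sq_div_card (s := univ)
    (f := fun ε : Fin m → Bool => F (fun i => if ε i then (1 : ℝ) else -1))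

lemma radExp_sqrt_le {F : (Fin m → ℝ) → ℝ} (hF : ∀ σ, 0 ≤ F σ) :
    radExp m (fun σ => √(F σ)) ≤ √(radExp m F) := by
  refine (le_abs_self _).trans (Real.abs_le_sqrt ?_)
  simpa only [Real.sq_sqrt (hF _)] using sq_radExp_le (fun σ => √(F σ))

-- Off the diagonal, flipping the `i`-th sign is a bijection of sign vectors negating `σ i * σ j`.
lemma radExp_mul_apply (i j : Fin m) :
    radExp m (fun σ => σ i * σ j) = if i = j then 1 else 0 := by
  split_ifs with hij
  · subst hij
    have hsq (ε : Fin m → Bool) : (if ε i then (1 : ℝ) else -1) * (if ε i then 1 else -1) = 1 := by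
      split <;> norm_num
    simp [radExp, hsq]
  · have flip : Function.Involutive (fun ε : Fin m → Bool => Function.update ε i (!ε i)) := by
      intro ε; ext k; by_cases hk : k = i <;> simp_all
    have hneg := Equiv.sum_comp (flip.toPerm _) (fun ε : Fin m → Bool =>
      (if ε i then (1 : ℝ) else -1) * (if ε j then (1 : ℝ) else -1))
    simp only [Function.Involutive.coe_toPerm, Function.update_self,
      Function.update_of_ne (Ne.symm hij)] at hneg
    have hflip (b : Bool) : (if !b then (1 : ℝ) else -1) = -(if b then 1 else -1) := by
      cases b <;> norm_num
    simp only [hflip, neg_mul, sum_neg_distrib, neg_eq_self] at hneg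
    rw [radExp, hneg, zero_div]

lemma radExp_sq_sum (t : Finset (Fin m)) : radExp m (fun σ => (∑ i ∈ t, σ i) ^ 2) = #t := by
  simp_rw [sq, sum_mul_sum, radExp_sum, radExp_mul_apply]
  simp

end Rademacher

section Sample

variable {α : Type*} [DecidableEq α] {m : ℕ}

/-- The column at the empty suffix of the matrix `∑ i, σ i • e_{x i} e_εᵀ`. -/
def sampleWeight (x : Fin m → α) (σ : Fin m → ℝ) (z : α) : ℝ := ∑ i with x i = z, σ i

lemma sum_mul_apply_eq_sum_sampleWeight_mul (x : Fin m → α) (σ : Fin m → ℝ) (f : α → ℝ) :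
    ∑ i, σ i * f (x i) = ∑ z ∈ univ.image x, sampleWeight x σ z * f z := by
  rw [← sum_fiberwise_of_maps_to fun i _ => mem_image_of_mem x (mem_univ i)]
  refine sum_congr rfl fun z _ => ?_
  rw [sampleWeight, sum_mul]
  exact sum_congr rfl fun i hi => by rw [(mem_filter.mp hi).2]

lemma radExp_sum_sampleWeight_sq (x : Fin m → α) :
    radExp m (fun σ => ∑ z ∈ univ.image x, sampleWeight x σ z ^ 2) = m := by
  simp only [sampleWeight, radExp_sum, radExp_sq_sum]
  exact_mod_cast (card_eq_sum_card_image x univ).symm.trans (card_fin m)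

end Sample

section Hankel

variable {A : Type*}

def hankel (f : List A → ℝ) (z : List A × List A) : ℝ := f (z.1 ++ z.2)

noncomputable def hankelHSNorm (f : List A → ℝ) : ℝ := √(∑' z, hankel f z ^ 2)

lemma sqrt_sum_sq_le_hankelHSNorm {f : List A → ℝ} (hf : Summable (fun z => hankel f z ^ 2))
    (T : Finset (List A)) : √(∑ z ∈ T, f z ^ 2) ≤ hankelHSNorm f := by
  refine Real.sqrt_le_sqrt ?_
  calc ∑ z ∈ T, f z ^ 2 = ∑ z ∈ T.map (.sectL (List A) []), hankel f z ^ 2 := by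
        simp [hankel]
    _ ≤ ∑' z, hankel f z ^ 2 := hf.sum_le_tsum _ fun _ _ => sq_nonneg _

lemma sum_mul_apply_le_hankelHSNorm_mul [DecidableEq A] {f : List A → ℝ}
    (hf : Summable (fun z => hankel f z ^ 2)) {m : ℕ} (x : Fin m → List A) (σ : Fin m → ℝ) :
    ∑ i, σ i * f (x i) ≤ hankelHSNorm f * √(∑ z ∈ univ.image x, sampleWeight x σ z ^ 2) := by
  rw [sum_mul_apply_eq_sum_sampleWeight_mul, mul_comm]
  calc ∑ z ∈ univ.image x, sampleWeight x σ z * f z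
      ≤ √(∑ z ∈ univ.image x, sampleWeight x σ z ^ 2) * √(∑ z ∈ univ.image x, f z ^ 2) :=
        Real.sum_mul_le_sqrt_mul_sqrt _ _ _
    _ ≤ _ := by gcongr; exact sqrt_sum_sq_le_hankelHSNorm hf _

end Hankel

theorem rademacher_hankel_hs_bound_general (A : Type*)
    (r : ℝ) (hr : 0 < r) (F : Set (List A → ℝ))
    (hF : ∀ f ∈ F, Summable (fun z : List A × List A => (f (z.1 ++ z.2)) ^ 2) ∧
      Real.sqrt (∑' z : List A × List A, (f (z.1 ++ z.2)) ^ 2) ≤ r)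
    (m : ℕ) (x : Fin m → List A) :
    radExp m (fun σ => sSup {c | ∃ f ∈ F, c = (1 / m : ℝ) * ∑ i, σ i * f (x i)}) ≤
      r / Real.sqrt m := by
  classical
  set Q : (Fin m → ℝ) → ℝ := fun σ => ∑ z ∈ univ.image x, sampleWeight x σ z ^ 2
  have hsup (σ : Fin m → ℝ) :
      sSup {c | ∃ f ∈ F, c = (1 / m : ℝ) * ∑ i, σ i * f (x i)} ≤ r / m * √(Q σ) := by
    refine Real.sSup_le ?_ (by positivity)
    rintro _ ⟨f, hf, rfl⟩
    rw [one_div_mul_eq_div, div_mul_eq_mul_div]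
    gcongr
    exact (sum_mul_apply_le_hankelHSNorm_mul (hF f hf).1 x σ).trans (by gcongr; exact (hF f hf).2)
  calc _ ≤ radExp m (fun σ => r / m * √(Q σ)) := radExp_mono hsup
    _ = r / m * radExp m (fun σ => √(Q σ)) := radExp_const_mul _ _
    _ ≤ r / m * √(radExp m Q) := by gcongr; exact radExp_sqrt_le fun σ => by positivity
    _ = r / √m := by
      rw [radExp_sum_sampleWeight_sq, div_mul_eq_mul_div, mul_div_assoc, Real.sqrt_div_self',
        mul_one_div]

/-- Rademacher complexity bound for the class `H_{2,r}` of functions `f : Σ* → ℝ`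
whose Hankel matrix `H_f(u,v) = f(uv)` is Hilbert–Schmidt with `‖H_f‖_HS ≤ r`:
the empirical Rademacher complexity on any sample of `m ≥ 1` strings is at most `r/√m`. -/
theorem rademacher_hankel_hs_bound (A : Type*) [Fintype A]
    (r : ℝ) (hr : 0 < r) (F : Set (List A → ℝ))
    (hF : ∀ f ∈ F, Summable (fun z : List A × List A => (f (z.1 ++ z.2)) ^ 2) ∧
      Real.sqrt (∑' z : List A × List A, (f (z.1 ++ z.2)) ^ 2) ≤ r)
    (m : ℕ) (hm : 1 ≤ m) (x : Fin m → List A) :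
    radExp m (fun σ => sSup {c | ∃ f ∈ F, c = (1 / m : ℝ) * ∑ i, σ i * f (x i)}) ≤
      r / Real.sqrt m :=
  rademacher_hankel_hs_bound_general A r hr F hF m x
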